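/- arXiv:2407.04632 — 3 statements merged into one kernel-verified Lean document; each statement's English description precedes it below -/
import Mathlib

section
/- The Boolean function g(x,y,z) = (y ∧ x) ∨ (z ∧ ¬x) on three variables is computable by a once-appearance branching program but is not computable by any read-once DeMorgan formula. -/
/-- A deterministic branching program over `{0,1}` on `n` variables. Nodes are
numbered so that every edge goes to a strictly larger index (this fixes a
topological order and guarantees acyclicity). `Sum.inr b` denotes the `b`-sink. -/
structure BP (n : ℕ) where
  size : ℕ
  label : Fin size → Fin n
  next : Fin size → Bool → Fin size ⊕ Bool
  source : Fin size ⊕ Bool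
  wf : ∀ i b j, next i b = Sum.inl j → i < j

namespace BP

variable {n : ℕ}

/-- Fuel-based evaluation (the fuel `B.size` always suffices thanks to `wf`). -/
def evalAux (B : BP n) (x : Fin n → Bool) : ℕ → Fin B.size ⊕ Bool → Bool
  | _, Sum.inr b => b
  | 0, Sum.inl _ => false
  | k + 1, Sum.inl i => B.evalAux x k (B.next i (x (B.label i)))

/-- The Boolean value computed by the branching program on input `x`. -/
def eval (B : BP n) (x : Fin n → Bool) : Bool :=
  B.evalAux x B.size B.source

/-- `B` computes the total Boolean function `f`. -/
def Computes (B : BP n) (f : (Fin n → Bool) → Bool) : Prop :=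
  ∀ x, B.eval x = f x

/-- A once-appearance branching program: all node labels are distinct. -/
def IsOA (B : BP n) : Prop :=
  Function.Injective B.label

end BP

inductive Formula (n : ℕ) where
  | lit : Fin n → Bool → Formula n
  | and : Formula n → Formula n → Formula n
  | or : Formula n → Formula n → Formula n

namespace Formula

variable {n : ℕ}

def eval : Formula n → (Fin n → Bool) → Bool
  | lit i pos, x => if pos then x i else !x i
  | and F G, x => F.eval x && G.eval x
  | or F G, x => F.eval x || G.eval x

def varList : Formula n → List (Fin n)
  | lit i _ => [i]
  | and F G => F.varList ++ G.varList
  | or F G => F.varList ++ G.varList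

def ReadOnce (F : Formula n) : Prop := F.varList.Nodup

end Formula

/-- `g(x,y,z) = (y ∧ x) ∨ (z ∧ ¬x)`, with `x = v 0`, `y = v 1`, `z = v 2`. -/
def gFun (v : Fin 3 → Bool) : Bool := (v 1 && v 0) || (v 2 && !v 0)


def myBP : BP 3 where
  size := 3
  label := id
  next i b :=
    if i = 0 then (if b then Sum.inl 1 else Sum.inl 2) else Sum.inr b
  source := Sum.inl 0
  wf := by decide

namespace Formula

lemma eval_indep (F : Formula 3) (i : Fin 3) (h : i ∉ F.varList)
    (x y : Fin 3 → Bool) (hxy : ∀ j, j ≠ i → x j = y j) : F.eval x = F.eval y := by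
  induction F with
  | lit j b =>
      simp [varList] at h
      simp [eval, hxy j (Ne.symm h)]
  | and F G hF hG =>
      simp [varList] at h
      simp [eval, hF h.1, hG h.2]
  | or F G hF hG =>
      simp [varList] at h
      simp [eval, hF h.1, hG h.2]

lemma not_le_not : ∀ a b : Bool, a ≤ b → (!b) ≤ (!a) := by decide

lemma and_le_and : ∀ a b c d : Bool, a ≤ c → b ≤ d → (a && b) ≤ (c && d) := by decide
lemma or_le_or : ∀ a b c d : Bool, a ≤ c → b ≤ d → (a || b) ≤ (c || d) := by decide

/-- A formula reading variable `i` at most once is unate in `i`. -/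
lemma unate (F : Formula 3) (i : Fin 3) (h : F.varList.count i ≤ 1) :
    (∀ x y : Fin 3 → Bool, (∀ j, j ≠ i → x j = y j) → x i ≤ y i → F.eval x ≤ F.eval y) ∨
    (∀ x y : Fin 3 → Bool, (∀ j, j ≠ i → x j = y j) → y i ≤ x i → F.eval x ≤ F.eval y) := by
  induction F with
  | lit j b =>
      by_cases hj : j = i
      · subst hj
        cases b
        · right; intro x y _ hle; simp [eval]; exact not_le_not _ _ hle
        · left; intro x y _ hle; simpa [eval] using hle
      · left; intro x y hxy _
        simp [eval, hxy j hj]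
  | and F G hF hG =>
      rw [varList, List.count_append] at h
      by_cases hiF : i ∈ F.varList
      · have hFc := List.count_pos_iff.mpr hiF
        have hGind := eval_indep G i (by
          intro hm; have := List.count_pos_iff.mpr hm; omega)
        rcases hF (by omega) with hm | hm
        · left; intro x y hxy hle
          rw [eval, eval, hGind x y hxy]
          exact and_le_and _ _ _ _ (hm x y hxy hle) le_rfl
        · right; intro x y hxy hle
          rw [eval, eval, hGind x y hxy]
          exact and_le_and _ _ _ _ (hm x y hxy hle) le_rfl
      · have hFind := eval_indep F i hiF
        rcases hG (by
          have : F.varList.count i = 0 := List.count_eq_zero.mpr hiF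
          omega) with hm | hm
        · left; intro x y hxy hle
          rw [eval, eval, hFind x y hxy]
          exact and_le_and _ _ _ _ le_rfl (hm x y hxy hle)
        · right; intro x y hxy hle
          rw [eval, eval, hFind x y hxy]
          exact and_le_and _ _ _ _ le_rfl (hm x y hxy hle)
  | or F G hF hG =>
      rw [varList, List.count_append] at h
      by_cases hiF : i ∈ F.varList
      · have hGind := eval_indep G i (by
          intro hm
          have := List.count_pos_iff.mpr hm
          have := List.count_pos_iff.mpr hiF
          omega)
        rcases hF (by
          have := List.count_pos_iff.mpr hiF
          omega) with hm | hm
        · left; intro x y hxy hle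
          rw [eval, eval, hGind x y hxy]
          exact or_le_or _ _ _ _ (hm x y hxy hle) le_rfl
        · right; intro x y hxy hle
          rw [eval, eval, hGind x y hxy]
          exact or_le_or _ _ _ _ (hm x y hxy hle) le_rfl
      · have hFind := eval_indep F i hiF
        rcases hG (by
          have : F.varList.count i = 0 := List.count_eq_zero.mpr hiF
          omega) with hm | hm
        · left; intro x y hxy hle
          rw [eval, eval, hFind x y hxy]
          exact or_le_or _ _ _ _ le_rfl (hm x y hxy hle)
        · right; intro x y hxy hle
          rw [eval, eval, hFind x y hxy]
          exact or_le_or _ _ _ _ le_rfl (hm x y hxy hle)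

end Formula

/-- `g` is computable by a once-appearance branching program but
not by any read-once DeMorgan formula. -/
theorem oaBP_stronger_than_readOnceFormulas :
    (∃ B : BP 3, B.IsOA ∧ B.Computes gFun) ∧
      ¬∃ F : Formula 3, F.ReadOnce ∧ ∀ x, F.eval x = gFun x := by
  constructor
  · exact ⟨myBP, show Function.Injective myBP.label by decide, show ∀ x, myBP.eval x = gFun x by decide⟩
  · rintro ⟨F, hRO, hF⟩
    have hcount : F.varList.count (0 : Fin 3) ≤ 1 :=
      List.nodup_iff_count_le_one.mp hRO 0
    rcases Formula.unate F 0 hcount with hm | hm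
    · have := hm ![false, false, true] ![true, false, true] (by decide) (by decide)
      rw [hF, hF] at this
      revert this; decide
    · have := hm ![true, true, false] ![false, true, false] (by decide) (by decide)
      rw [hF, hF] at this
      revert this; decide
end

section
/- Every once-appearance branching program B computing the function f(y,z) = ⋁_{i∈[n]} (y_i ∧ z_i) has the following structure: all non-sink nodes of B form a single path of 2n edges a_1, b_1, a_2, b_2, …, a_n, b_n ending in the 0-sink, where for each i the pair of labels {a_i, b_i} equals {y_{π(i)}, z_{π(i)}} for some permutation π of [n]; the edge a_i = 1 goes to b_i, the edges b_i = 0 and a_i = 0 go to a_{i+1} (to the 0-sink when i = n), and each edge b_i = 1 goes to the 1-sink. -/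
def yVar (n : ℕ) (i : Fin n) : Fin (n + n) := Fin.castAdd n i

def zVar (n : ℕ) (i : Fin n) : Fin (n + n) := Fin.natAdd n i

/-- `f(y,z) = ⋁_{i ∈ [n]} (y i ∧ z i)`. -/
def orOfAnds (n : ℕ) (x : Fin (n + n) → Bool) : Bool :=
  decide (∃ i : Fin n, x (yVar n i) = true ∧ x (zVar n i) = true)

namespace BP

variable {m : ℕ} (B : BP m)

def val (t : Fin B.size ⊕ Bool) (x : Fin m → Bool) : Bool :=
  B.evalAux x B.size t

-- Sinks come after all nodes, so every edge `v → next v b` increases the index.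
def index : Fin B.size ⊕ Bool → ℕ :=
  Sum.elim Fin.val fun _ => B.size

def nodeAt (k : ℕ) : Fin B.size ⊕ Bool :=
  if h : k < B.size then .inl ⟨k, h⟩ else .inr false

variable {B}

lemma index_le_size (t : Fin B.size ⊕ Bool) : B.index t ≤ B.size := by
  rcases t with v | b
  · exact v.isLt.le
  · exact le_rfl

lemma lt_index_next (v : Fin B.size) (b : Bool) : v.val < B.index (B.next v b) := by
  rcases h : B.next v b with w | c
  · exact B.wf v b w h
  · exact v.isLt

lemma nodeAt_of_lt {k : ℕ} (h : k < B.size) : B.nodeAt k = .inl ⟨k, h⟩ :=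
  dif_pos h

lemma nodeAt_of_le {k : ℕ} (h : B.size ≤ k) : B.nodeAt k = .inr false :=
  dif_neg h.not_gt

lemma nodeAt_eq_dite {N k : ℕ} (h : B.size = N) :
    B.nodeAt k = if hk : k < N then .inl (Fin.cast h.symm ⟨k, hk⟩) else .inr false := by
  unfold nodeAt
  split_ifs <;> first | rfl | omega

lemma nodeAt_index {t : Fin B.size ⊕ Bool} (ht : t ≠ .inr true) : B.nodeAt (B.index t) = t := by
  rcases t with v | (_ | _)
  · exact nodeAt_of_lt v.isLt
  · exact nodeAt_of_le le_rfl
  · exact absurd rfl ht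

@[simp] lemma evalAux_inr (x : Fin m → Bool) (k : ℕ) (b : Bool) :
    B.evalAux x k (.inr b) = b := by
  cases k <;> rfl

@[simp] lemma val_inr (b : Bool) (x : Fin m → Bool) : B.val (.inr b) x = b :=
  evalAux_inr x _ b

lemma evalAux_congr_fuel (x : Fin m → Bool) {k k' : ℕ} {t : Fin B.size ⊕ Bool}
    (hk : B.size - B.index t ≤ k) (hk' : B.size - B.index t ≤ k') :
    B.evalAux x k t = B.evalAux x k' t := by
  induction k generalizing t k' with
  | zero =>
    rcases t with v | b
    · exact absurd hk (by simp [index]; omega)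
    · simp
  | succ k ih =>
    rcases t with v | b
    · obtain ⟨k', rfl⟩ : ∃ l, k' = l + 1 := ⟨k' - 1, by simp [index] at hk'; omega⟩
      have := lt_index_next v (x (B.label v))
      exact ih (by simp [index] at hk; omega) (by simp [index] at hk'; omega)
    · simp

lemma val_inl (v : Fin B.size) (x : Fin m → Bool) :
    B.val (.inl v) x = B.val (B.next v (x (B.label v))) x := by
  have hv := v.isLt
  have hnext := lt_index_next v (x (B.label v))
  calc B.val (.inl v) x = B.evalAux x (B.size - 1 + 1) (.inl v) :=
        evalAux_congr_fuel x (by simp [index]) (by simp [index]; omega)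
    _ = B.val (B.next v (x (B.label v))) x :=
        evalAux_congr_fuel (t := B.next v _) x (by omega) (by omega)

lemma evalAux_congr_input {x y : Fin m → Bool} (k : ℕ) {t : Fin B.size ⊕ Bool}
    (h : ∀ q : Fin B.size, B.index t ≤ q.val → x (B.label q) = y (B.label q)) :
    B.evalAux x k t = B.evalAux y k t := by
  induction k generalizing t with
  | zero => rcases t with _ | _ <;> rfl
  | succ k ih =>
    rcases t with v | b
    · change B.evalAux x k _ = B.evalAux y k _
      rw [← h v le_rfl]
      have := lt_index_next v (x (B.label v))
      exact ih fun q hq => h q (by simp [index]; omega)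
    · simp

lemma dependsOn_val (t : Fin B.size ⊕ Bool) :
    DependsOn (B.val t) (B.label '' {q | B.index t ≤ q.val}) :=
  fun _ _ h => evalAux_congr_input _ fun q hq => h _ ⟨q, hq, rfl⟩

lemma val_next (hoa : B.IsOA) (v : Fin B.size) (b : Bool) (x : Fin m → Bool) :
    B.val (B.next v b) x = B.val (.inl v) (Function.update x (B.label v) b) := by
  rw [val_inl, Function.update_self]
  refine dependsOn_val _ ?_
  rintro _ ⟨q, hq, rfl⟩
  have hqv : q ≠ v := by
    rintro rfl
    exact (lt_index_next q b).not_ge hq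
  exact (Function.update_of_ne (hoa.ne hqv) _ _).symm

def nodesFrom (k : ℕ) : Finset (Fin B.size) :=
  Finset.univ.filter fun q => k ≤ q.val

lemma card_nodesFrom (k : ℕ) : (B.nodesFrom k).card = B.size - k := by
  have := Finset.card_filter_add_card_filter_not (s := Finset.univ)
    (fun q : Fin B.size => k ≤ q.val)
  simp only [not_le, Fin.card_filter_val_lt, Finset.card_univ, Fintype.card_fin] at this
  unfold nodesFrom
  omega

lemma subset_image_label_nodesFrom (hoa : B.IsOA) {T : Finset (Fin m)} {k : ℕ}
    (hT : (T : Set (Fin m)) ⊆ B.label '' {q | k ≤ q.val}) :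
    T ⊆ (B.nodesFrom k).image B.label ∧ ((B.nodesFrom k).image B.label).card = B.size - k := by
  refine ⟨fun u hu => ?_, by rw [Finset.card_image_of_injective _ hoa, card_nodesFrom]⟩
  obtain ⟨q, hq, rfl⟩ := hT hu
  exact Finset.mem_image_of_mem _ (by simpa [nodesFrom] using hq)

lemma card_le_of_subset_image_label (hoa : B.IsOA) {T : Finset (Fin m)} {k : ℕ}
    (hT : (T : Set (Fin m)) ⊆ B.label '' {q | k ≤ q.val}) : T.card ≤ B.size - k := by
  obtain ⟨hsub, hcard⟩ := subset_image_label_nodesFrom hoa hT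
  exact hcard ▸ Finset.card_le_card hsub

lemma label_mem_of_card_eq (hoa : B.IsOA) {T : Finset (Fin m)} {k : ℕ}
    (hT : (T : Set (Fin m)) ⊆ B.label '' {q | k ≤ q.val}) (hcard : T.card = B.size - k)
    {q : Fin B.size} (hq : k ≤ q.val) : B.label q ∈ T := by
  obtain ⟨hsub, hcard'⟩ := subset_image_label_nodesFrom hoa hT
  rw [Finset.eq_of_subset_of_card_le hsub (by omega)]
  exact Finset.mem_image_of_mem _ (by simpa [nodesFrom] using hq)

end BP

lemma DependsOn.mem_of_update_ne {ι β : Type*} [DecidableEq ι] {α : ι → Type*}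
    {f : (Π i, α i) → β} {s : Set ι} (hf : DependsOn f s) {x : Π i, α i} {i : ι} {a : α i}
    (hne : f (Function.update x i a) ≠ f x) : i ∈ s := by
  by_contra hi
  exact hne (hf fun k hk => Function.update_of_ne (ne_of_mem_of_not_mem hk hi) a x)

section OrOfAnds

variable {n : ℕ}

def pairVar (n : ℕ) (j : Fin n) (w : Bool) : Fin (n + n) :=
  if w then yVar n j else zVar n j

lemma pairVar_inj {j j' : Fin n} {w w' : Bool} :
    pairVar n j w = pairVar n j' w' ↔ j = j' ∧ w = w' := by
  cases w <;> cases w' <;> simp [pairVar, yVar, zVar, Fin.ext_iff] <;> omega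

lemma pairVar_not (j : Fin n) (w : Bool) :
    pairVar n j (!w) = if w then zVar n j else yVar n j := by
  cases w <;> rfl

lemma exists_pairVar_eq (u : Fin (n + n)) : ∃ j w, pairVar n j w = u := by
  induction u using Fin.addCases with
  | left j => exact ⟨j, true, rfl⟩
  | right j => exact ⟨j, false, rfl⟩

def pairVars (n : ℕ) (S : Finset (Fin n)) : Finset (Fin (n + n)) :=
  (S ×ˢ Finset.univ).image fun p => pairVar n p.1 p.2

@[simp] lemma pairVar_mem_pairVars {S : Finset (Fin n)} {j : Fin n} {w : Bool} :
    pairVar n j w ∈ pairVars n S ↔ j ∈ S := by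
  simp [pairVars, pairVar_inj]

lemma card_pairVars (S : Finset (Fin n)) : (pairVars n S).card = 2 * S.card := by
  rw [pairVars, Finset.card_image_of_injective, Finset.card_product, Finset.card_univ,
    Fintype.card_bool, mul_comm]
  rintro ⟨j, w⟩ ⟨j', w'⟩ h
  simpa [pairVar_inj] using h

/-- `⋁_{u ∈ W} u ∨ ⋁_{j ∈ S} (y_j ∧ z_j)`: inside the program, `W` holds the partners of the
variables already read as `1`. -/
def orOfAndsWith (n : ℕ) (W : Finset (Fin (n + n))) (S : Finset (Fin n))
    (x : Fin (n + n) → Bool) : Bool :=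
  decide ((∃ u ∈ W, x u = true) ∨ ∃ j ∈ S, ∀ w, x (pairVar n j w) = true)

variable {W : Finset (Fin (n + n))} {S : Finset (Fin n)}

lemma orOfAnds_eq_orOfAndsWith : orOfAnds n = orOfAndsWith n ∅ Finset.univ := by
  ext x
  simp [orOfAnds, orOfAndsWith, Bool.forall_bool, pairVar, and_comm]

@[simp] lemma orOfAndsWith_false : orOfAndsWith n W S (fun _ => false) = false := by
  simp [orOfAndsWith]

lemma orOfAndsWith_insert (a : Fin (n + n)) (x : Fin (n + n) → Bool) :
    orOfAndsWith n (insert a W) S x = (x a || orOfAndsWith n W S x) := by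
  cases h : x a <;> simp [orOfAndsWith, h]

lemma orOfAndsWith_update_of_mem {a : Fin (n + n)} (ha : a ∈ W) (x : Fin (n + n) → Bool) :
    orOfAndsWith n W S (Function.update x a true) = true := by
  simpa [orOfAndsWith] using Or.inl ⟨a, ha, by simp⟩

lemma dependsOn_orOfAndsWith : DependsOn (orOfAndsWith n W S) ↑(W ∪ pairVars n S) := by
  intro x y h
  have hW : ∀ u ∈ W, x u = y u := fun u hu => h u (by simp [hu])
  have hS : ∀ j ∈ S, ∀ w, x (pairVar n j w) = y (pairVar n j w) := fun j hj w =>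
    h _ (by simp [hj])
  simp only [orOfAndsWith, decide_eq_decide]
  refine or_congr ?_ ?_
  · exact exists_congr fun u => and_congr_right fun hu => by rw [hW u hu]
  · exact exists_congr fun j => and_congr_right fun hj => forall_congr' fun w => by
      rw [hS j hj w]

lemma orOfAndsWith_update_of_notMem {a : Fin (n + n)} (ha : a ∉ W) (haS : a ∉ pairVars n S)
    (x : Fin (n + n) → Bool) (b : Bool) :
    orOfAndsWith n W S (Function.update x a b) = orOfAndsWith n W S x :=
  dependsOn_orOfAndsWith fun u hu =>
    Function.update_of_ne (by rintro rfl; simp_all) b x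

lemma orOfAndsWith_eq_of_mem {j : Fin n} (hj : j ∈ S) (w : Bool) (x : Fin (n + n) → Bool) :
    orOfAndsWith n W S x =
      (x (pairVar n j w) && x (pairVar n j (!w)) || orOfAndsWith n W (S.erase j) x) := by
  conv_lhs => rw [← Finset.insert_erase hj]
  cases w <;> cases h₁ : x (pairVar n j true) <;> cases h₂ : x (pairVar n j false) <;>
    simp [orOfAndsWith, Bool.forall_bool, h₁, h₂]

lemma orOfAndsWith_update_pairVar_true {j : Fin n} {w : Bool} (hj : j ∈ S)
    (hW : pairVar n j w ∉ W) (x : Fin (n + n) → Bool) :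
    orOfAndsWith n W S (Function.update x (pairVar n j w) true) =
      orOfAndsWith n (insert (pairVar n j (!w)) W) (S.erase j) x := by
  rw [orOfAndsWith_eq_of_mem hj w, Function.update_self,
    Function.update_of_ne (by simp [pairVar_inj]), orOfAndsWith_update_of_notMem hW (by simp),
    orOfAndsWith_insert, Bool.true_and]

lemma orOfAndsWith_update_pairVar_false {j : Fin n} {w : Bool} (hj : j ∈ S)
    (hW : pairVar n j w ∉ W) (x : Fin (n + n) → Bool) :
    orOfAndsWith n W S (Function.update x (pairVar n j w) false) =
      orOfAndsWith n W (S.erase j) x := by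
  rw [orOfAndsWith_eq_of_mem hj w, Function.update_self, Bool.false_and, Bool.false_or,
    orOfAndsWith_update_of_notMem hW (by simp)]

lemma subset_of_dependsOn_orOfAndsWith (hdisj : Disjoint W (pairVars n S)) {s : Set (Fin (n + n))}
    (h : DependsOn (orOfAndsWith n W S) s) : ↑(W ∪ pairVars n S) ⊆ s := by
  intro u hu
  rcases Finset.mem_union.mp hu with hu | hu
  · refine h.mem_of_update_ne (x := fun _ => false) (a := true) ?_
    rw [orOfAndsWith_update_of_mem hu, orOfAndsWith_false]
    decide
  · obtain ⟨j, w, rfl⟩ := exists_pairVar_eq u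
    have hj : j ∈ S := pairVar_mem_pairVars.mp hu
    -- the partner variable is already set, so flipping `pairVar n j w` decides the value
    refine h.mem_of_update_ne (x := Function.update (fun _ => false) (pairVar n j (!w)) true)
      (a := true) ?_
    rw [orOfAndsWith_update_pairVar_true hj (Finset.disjoint_right.mp hdisj hu),
      orOfAndsWith_update_of_mem (Finset.mem_insert_self _ _),
      orOfAndsWith_update_pairVar_true hj (Finset.disjoint_right.mp hdisj (by simpa using hj)),
      orOfAndsWith_false]
    decide

end OrOfAnds

namespace BP

variable {n : ℕ} {B : BP (n + n)} {W : Finset (Fin (n + n))} {S : Finset (Fin n)}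

lemma card_add_index_le (hoa : B.IsOA) (hdisj : Disjoint W (pairVars n S))
    {t : Fin B.size ⊕ Bool} (hval : ∀ x, B.val t x = orOfAndsWith n W S x) :
    W.card + 2 * S.card + B.index t ≤ B.size := by
  have hsub := subset_of_dependsOn_orOfAndsWith hdisj (funext hval ▸ dependsOn_val t)
  have := card_le_of_subset_image_label hoa hsub
  rw [Finset.card_union_of_disjoint hdisj, card_pairVars] at this
  have := index_le_size t
  omega

lemma ne_inr_true_of_val_eq {t : Fin B.size ⊕ Bool}
    (hval : ∀ x, B.val t x = orOfAndsWith n W S x) : t ≠ .inr true := by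
  rintro rfl
  simpa using hval fun _ => false

lemma eq_nodeAt_of_val_eq (hoa : B.IsOA) (hdisj : Disjoint W (pairVars n S))
    {t : Fin B.size ⊕ Bool} (hval : ∀ x, B.val t x = orOfAndsWith n W S x) {k : ℕ}
    (hsize : k + W.card + 2 * S.card = B.size) (hk : k ≤ B.index t) : t = B.nodeAt k := by
  have hle := card_add_index_le hoa hdisj hval
  rw [← nodeAt_index (ne_inr_true_of_val_eq hval)]
  congr 1
  omega

lemma label_mem_pairVars (hoa : B.IsOA) {V : Fin B.size} (hsize : V.val + 2 * S.card = B.size)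
    (hval : ∀ x, B.val (.inl V) x = orOfAndsWith n ∅ S x) {q : Fin B.size}
    (hq : V.val ≤ q.val) :
    B.label q ∈ pairVars n S := by
  have hsub := subset_of_dependsOn_orOfAndsWith (Finset.disjoint_empty_left _)
    (funext hval ▸ dependsOn_val (.inl V))
  rw [Finset.empty_union] at hsub
  exact label_mem_of_card_eq hoa hsub (by rw [card_pairVars]; simp [index]; omega) hq

structure IsBlockHead (B : BP (n + n)) (V : Fin B.size) (S : Finset (Fin n)) (j : Fin n)
    (w : Bool) : Prop where
  size_eq : V.val + 2 * S.card = B.size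
  val_eq : ∀ x, B.val (.inl V) x = orOfAndsWith n ∅ S x
  label_eq : B.label V = pairVar n j w
  mem : j ∈ S

namespace IsBlockHead

variable {V : Fin B.size} {j : Fin n} {w : Bool} (h : B.IsBlockHead V S j w) (hoa : B.IsOA)
include h hoa

lemma val_next_true (x : Fin (n + n) → Bool) :
    B.val (B.next V true) x = orOfAndsWith n {pairVar n j (!w)} (S.erase j) x := by
  rw [val_next hoa, h.val_eq, h.label_eq,
    orOfAndsWith_update_pairVar_true h.mem (Finset.notMem_empty _)]
  rfl

lemma val_next_false (x : Fin (n + n) → Bool) :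
    B.val (B.next V false) x = orOfAndsWith n ∅ (S.erase j) x := by
  rw [val_next hoa, h.val_eq, h.label_eq,
    orOfAndsWith_update_pairVar_false h.mem (Finset.notMem_empty _)]

lemma next_true_eq_nodeAt : B.next V true = B.nodeAt (V.val + 1) := by
  have := h.size_eq
  have := Finset.card_erase_add_one h.mem
  exact eq_nodeAt_of_val_eq hoa (by simp) (h.val_next_true hoa) (by simp; omega)
    (lt_index_next V true)

lemma next_false_ne {t : Fin B.size ⊕ Bool} {S' : Finset (Fin n)}
    (hW : pairVar n j (!w) ∈ W) (ht : ∀ x, B.val t x = orOfAndsWith n W S' x) :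
    B.next V false ≠ t := by
  intro hVt
  have := h.val_next_false hoa (Function.update (fun _ => false) (pairVar n j (!w)) true)
  rw [hVt, ht, orOfAndsWith_update_of_mem hW, orOfAndsWith_update_of_notMem (by simp) (by simp),
    orOfAndsWith_false] at this
  exact Bool.noConfusion this

lemma next_false_eq_nodeAt : B.next V false = B.nodeAt (V.val + 2) := by
  have := h.size_eq
  have := Finset.card_erase_add_one h.mem
  have hM := h.val_next_false hoa
  refine eq_nodeAt_of_val_eq hoa (by simp) hM (by simp; omega) ?_
  have hlt := lt_index_next V false
  by_contra hle
  have hidx : B.index (B.next V false) = V.val + 1 := by omega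
  refine h.next_false_ne hoa (Finset.mem_singleton_self _) (h.val_next_true hoa) ?_
  rw [h.next_true_eq_nodeAt hoa, ← hidx, nodeAt_index (ne_inr_true_of_val_eq hM)]

lemma label_succ (hP : V.val + 1 < B.size) : B.label ⟨V.val + 1, hP⟩ = pairVar n j (!w) := by
  set P : Fin B.size := ⟨V.val + 1, hP⟩
  have hVP : B.next V true = .inl P := by rw [h.next_true_eq_nodeAt hoa, nodeAt_of_lt hP]
  obtain ⟨k, w', hk⟩ := exists_pairVar_eq (B.label P)
  have hkS : k ∈ S :=
    pairVar_mem_pairVars.mp (hk ▸ label_mem_pairVars hoa h.size_eq h.val_eq (by simp [P]))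
  by_contra hne
  have hkj : k ≠ j := by
    rintro rfl
    rcases Bool.eq_or_eq_not w' w with rfl | rfl
    · exact absurd (hoa (hk.symm.trans h.label_eq.symm)) (by simp [P, Fin.ext_iff])
    · exact hne hk.symm
  have hk' : k ∈ S.erase j := Finset.mem_erase.mpr ⟨hkj, hkS⟩
  -- reading a variable of another pair at `P` leaves a function with `2 |S| - 2` variables,
  -- which would have to sit at `V + 2`, where `next V false` already is
  have hR (x) : B.val (B.next P true) x =
      orOfAndsWith n {pairVar n k (!w'), pairVar n j (!w)} ((S.erase j).erase k) x := by
    rw [val_next hoa, ← hVP, h.val_next_true hoa, ← hk,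
      orOfAndsWith_update_pairVar_true hk' (by simp [pairVar_inj, hkj])]
  have hcard := Finset.card_erase_add_one hk'
  have hcard' := Finset.card_erase_add_one h.mem
  have := h.size_eq
  have hRM := eq_nodeAt_of_val_eq (k := V.val + 2) hoa (by simp [hkj]) hR
    (by rw [Finset.card_pair (by simp [pairVar_inj, hkj])]; omega)
    (lt_index_next P true)
  exact h.next_false_ne hoa (by simp) hR (by rw [hRM, h.next_false_eq_nodeAt hoa])

lemma val_succ (hP : V.val + 1 < B.size) (x : Fin (n + n) → Bool) :
    B.val (.inl ⟨V.val + 1, hP⟩) x = orOfAndsWith n {pairVar n j (!w)} (S.erase j) x := by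
  rw [← nodeAt_of_lt hP, ← h.next_true_eq_nodeAt hoa, h.val_next_true hoa]

lemma next_succ_false (hP : V.val + 1 < B.size) :
    B.next ⟨V.val + 1, hP⟩ false = B.nodeAt (V.val + 2) := by
  have hval (x) :
      B.val (B.next ⟨V.val + 1, hP⟩ false) x = orOfAndsWith n ∅ (S.erase j) x := by
    rw [val_next hoa, h.label_succ hoa hP, h.val_succ hoa hP, ← Finset.insert_empty,
      orOfAndsWith_insert, Function.update_self, Bool.false_or,
      orOfAndsWith_update_of_notMem (by simp) (by simp)]
  have := h.size_eq
  have := Finset.card_erase_add_one h.mem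
  exact eq_nodeAt_of_val_eq hoa (by simp) hval (by simp; omega)
    (lt_index_next ⟨V.val + 1, hP⟩ false)

lemma next_succ_true (hP : V.val + 1 < B.size)
    (hzero : ∀ k, V.val + 2 ≤ k → B.val (B.nodeAt k) (fun _ => false) = false) :
    B.next ⟨V.val + 1, hP⟩ true = .inr true := by
  have htrue : B.val (B.next ⟨V.val + 1, hP⟩ true) (fun _ => false) = true := by
    rw [val_next hoa, h.label_succ hoa hP, h.val_succ hoa hP,
      orOfAndsWith_update_of_mem (Finset.mem_singleton_self _)]
  by_contra hne
  have := hzero _ (lt_index_next ⟨V.val + 1, hP⟩ true)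
  rw [nodeAt_index hne, htrue] at this
  exact Bool.noConfusion this

end IsBlockHead

/-- Nodes `a, a + 1` are the paper's `a_i, b_i`, reading the pair `y_j, z_j`
(`y_j` first iff `w`). -/
structure IsPairBlock (B : BP (n + n)) (a : ℕ) (j : Fin n) (w : Bool) : Prop where
  lt : a + 1 < B.size
  label_fst : B.label ⟨a, by omega⟩ = pairVar n j w
  label_snd : B.label ⟨a + 1, lt⟩ = pairVar n j (!w)
  next_fst_true : B.next ⟨a, by omega⟩ true = .inl ⟨a + 1, lt⟩
  next_snd_true : B.next ⟨a + 1, lt⟩ true = .inr true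
  next_fst_false : B.next ⟨a, by omega⟩ false = B.nodeAt (a + 2)
  next_snd_false : B.next ⟨a + 1, lt⟩ false = B.nodeAt (a + 2)

lemma IsPairBlock.eq_or_eq_succ (hoa : B.IsOA) {a b : ℕ} {j : Fin n} {w w' : Bool}
    (ha : B.IsPairBlock a j w) (hb : B.IsPairBlock b j w') : a = b ∨ a = b + 1 := by
  rcases Bool.eq_or_eq_not w w' with rfl | rfl
  · exact .inl (congrArg Fin.val (hoa (ha.label_fst.trans hb.label_fst.symm)))
  · exact .inr (congrArg Fin.val (hoa (ha.label_fst.trans hb.label_snd.symm)))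

theorem isPairBlock_of_val_nodeAt_eq (hoa : B.IsOA) {S : Finset (Fin n)} {v : ℕ}
    (hsize : v + 2 * S.card = B.size)
    (hval : ∀ x, B.val (B.nodeAt v) x = orOfAndsWith n ∅ S x) :
    (∀ k, v ≤ k → B.val (B.nodeAt k) (fun _ => false) = false) ∧
      ∀ i < S.card, ∃ j w, B.IsPairBlock (v + 2 * i) j w := by
  induction hs : S.card generalizing S v with
  | zero =>
    refine ⟨fun k hk => ?_, fun i hi => absurd hi (Nat.not_lt_zero i)⟩
    rw [nodeAt_of_le (by omega), val_inr]
  | succ s ih =>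
    have hv : v < B.size := by omega
    set V : Fin B.size := ⟨v, hv⟩
    rw [nodeAt_of_lt hv] at hval
    obtain ⟨j, w, hlab⟩ := exists_pairVar_eq (B.label V)
    have hsize' : V.val + 2 * S.card = B.size := by simp [V]; omega
    have hj : j ∈ S :=
      pairVar_mem_pairVars.mp (hlab ▸ label_mem_pairVars hoa hsize' hval le_rfl)
    have hV : B.IsBlockHead V S j w := ⟨hsize', hval, hlab.symm, hj⟩
    have hP : v + 1 < B.size := by omega
    have hM := hV.next_false_eq_nodeAt hoa
    obtain ⟨hzero, hblocks⟩ := ih (S := S.erase j) (v := v + 2)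
      (by rw [Finset.card_erase_of_mem hj]; omega)
      (fun x => hM ▸ hV.val_next_false hoa x)
      (by rw [Finset.card_erase_of_mem hj]; omega)
    have hblock : B.IsPairBlock v j w :=
      { lt := hP
        label_fst := hV.label_eq
        label_snd := hV.label_succ hoa hP
        next_fst_true := (hV.next_true_eq_nodeAt hoa).trans (nodeAt_of_lt hP)
        next_snd_true := hV.next_succ_true hoa hP hzero
        next_fst_false := hM
        next_snd_false := hV.next_succ_false hoa hP }
    refine ⟨fun k hk => ?_, fun i hi => ?_⟩
    · rcases (by omega : k = v ∨ k = v + 1 ∨ v + 2 ≤ k) with rfl | rfl | hk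
      · rw [nodeAt_of_lt hv, hval, orOfAndsWith_false]
      · rw [nodeAt_of_lt hP, hV.val_succ hoa hP, orOfAndsWith_false]
      · exact hzero k hk
    · rcases i with _ | i
      · exact ⟨j, w, hblock⟩
      · rw [show v + 2 * (i + 1) = v + 2 + 2 * i by ring]
        exact hblocks i (by omega)

end BP

/-- every once-appearance branching program computing `⋁ᵢ (yᵢ ∧ zᵢ)` consists
of a single path `a_1, b_1, a_2, b_2, …, a_n, b_n` of all `2n` non-sink nodes ending in the
`0`-sink (in the topological order of the program), where `{a_i, b_i} = {y_{π i}, z_{π i}}`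
for a permutation `π`, the edge `a_i = 1` goes to `b_i`, the edges `a_i = 0` and `b_i = 0`
go to `a_{i+1}` (to the `0`-sink for `i = n`), and every edge `b_i = 1` goes to the `1`-sink. -/
theorem oaBP_structure_orOfAnds (n : ℕ) (hn : 1 ≤ n) (B : BP (n + n))
    (hoa : B.IsOA) (hcomp : B.Computes (orOfAnds n)) :
    ∃ h : B.size = n + n, ∃ π : Equiv.Perm (Fin n), ∃ w : Fin n → Bool,
      B.source = Sum.inl (Fin.cast h.symm ⟨0, by omega⟩) ∧
      ∀ i : Fin n,
        let a : Fin B.size := Fin.cast h.symm ⟨2 * i.val, by have := i.isLt; omega⟩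
        let b : Fin B.size := Fin.cast h.symm ⟨2 * i.val + 1, by have := i.isLt; omega⟩
        B.label a = (if w i then yVar n (π i) else zVar n (π i)) ∧
        B.label b = (if w i then zVar n (π i) else yVar n (π i)) ∧
        B.next a true = Sum.inl b ∧
        B.next b true = Sum.inr true ∧
        B.next a false =
          (if hlt : 2 * i.val + 2 < n + n then Sum.inl (Fin.cast h.symm ⟨2 * i.val + 2, hlt⟩)
            else Sum.inr false) ∧
        B.next b false =
          (if hlt : 2 * i.val + 2 < n + n then Sum.inl (Fin.cast h.symm ⟨2 * i.val + 2, hlt⟩)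
            else Sum.inr false) := by
  have hval (x) : B.val B.source x = orOfAndsWith n ∅ Finset.univ x := by
    rw [← orOfAnds_eq_orOfAndsWith]
    exact hcomp x
  have hdisj := Finset.disjoint_empty_left (pairVars n Finset.univ)
  have h : B.size = n + n := by
    have hcount := BP.card_add_index_le hoa hdisj hval
    have hinj := Fintype.card_le_of_injective _ hoa
    simp only [Finset.card_empty, Finset.card_univ, Fintype.card_fin] at hcount hinj
    omega
  have hsrc := BP.eq_nodeAt_of_val_eq (k := 0) hoa hdisj hval (by simp; omega) (Nat.zero_le _)
  obtain ⟨-, hblocks⟩ :=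
    BP.isPairBlock_of_val_nodeAt_eq (v := 0) hoa (by simp; omega) (hsrc ▸ hval)
  choose π w hπ using fun i : Fin n => by simpa only [zero_add] using hblocks i (by simp)
  have hπinj : Function.Injective π := fun i i' hii' => by
    have := (hπ i).eq_or_eq_succ hoa (hii' ▸ hπ i')
    have := (hπ i').eq_or_eq_succ hoa (hii' ▸ hπ i)
    omega
  refine ⟨h, Equiv.ofBijective π hπinj.bijective_of_finite, w, ?_, fun i => ?_⟩
  · rw [hsrc, BP.nodeAt_of_lt (by omega)]
    rfl
  · have hb := hπ i
    exact ⟨hb.label_fst, hb.label_snd.trans (pairVar_not _ _), hb.next_fst_true, hb.next_snd_true,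
      hb.next_fst_false.trans (BP.nodeAt_eq_dite h),
      hb.next_snd_false.trans (BP.nodeAt_eq_dite h)⟩
end

section
/- The deterministic query complexity of the partial function γ'_n is at most 2n + 2, where γ'_n : {0,1}^{3n} → {0,1,*} is defined on (x,y,z) ∈ ({0,1}^n)^3 by: γ'_n = ⋁_i (y_i ∧ z_i) if x = 0^n; γ'_n = ⋁_i z_i if x = 1^n; γ'_n = ⋁_i (x_i ∨ y_i) if z = 1^n; γ'_n = 0 if z = 0^n; and γ'_n = * otherwise. (Here a decision tree computes γ'_n if on every input where γ'_n is defined it outputs the defined value.) -/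
/-- A deterministic decision tree on `n` Boolean variables. -/
inductive DTree (n : ℕ) where
  | leaf : Bool → DTree n
  | node : Fin n → DTree n → DTree n → DTree n

namespace DTree

variable {n : ℕ}

def eval : DTree n → (Fin n → Bool) → Bool
  | leaf b, _ => b
  | node i t0 t1, x => if x i then t1.eval x else t0.eval x

/-- The number of queries the tree makes on input `x`. -/
def cost : DTree n → (Fin n → Bool) → ℕ
  | leaf _, _ => 0
  | node i t0 t1, x => (if x i then t1.cost x else t0.cost x) + 1

end DTree

/-- The variable `x i` among the `3n` variables. -/
def xV (n : ℕ) (i : Fin n) : Fin (n + n + n) := Fin.castAdd n (Fin.castAdd n i)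

/-- The variable `y i` among the `3n` variables. -/
def yV (n : ℕ) (i : Fin n) : Fin (n + n + n) := Fin.castAdd n (Fin.natAdd n i)

/-- The variable `z i` among the `3n` variables. -/
def zV (n : ℕ) (i : Fin n) : Fin (n + n + n) := Fin.natAdd (n + n) i

/-- The partial function `γ'_n : {0,1}^{3n} → {0,1,*}` (`none` is `*`):
`⋁ᵢ (yᵢ ∧ zᵢ)` if `x = 0ⁿ`; `⋁ᵢ zᵢ` if `x = 1ⁿ`; `⋁ᵢ (xᵢ ∨ yᵢ)` if `z = 1ⁿ`;
`0` if `z = 0ⁿ`; `*` otherwise. -/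
def gammaP (n : ℕ) (w : Fin (n + n + n) → Bool) : Option Bool :=
  if ∀ i, w (xV n i) = false then
    some (decide (∃ i : Fin n, w (yV n i) = true ∧ w (zV n i) = true))
  else if ∀ i, w (xV n i) = true then
    some (decide (∃ i : Fin n, w (zV n i) = true))
  else if ∀ i, w (zV n i) = true then
    some (decide (∃ i : Fin n, w (xV n i) = true ∨ w (yV n i) = true))
  else if ∀ i, w (zV n i) = false then
    some false
  else none

/-- A decision tree computes a partial function if it outputs the defined value on every
input where the function is defined. -/
def DTree.ComputesPartial {m : ℕ} (T : DTree m) (g : (Fin m → Bool) → Option Bool) : Prop :=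
  ∀ w b, g w = some b → T.eval w = b

/-!
Query `x₀`. If `x₀ = 1`, every defined input has value `⋁ᵢ zᵢ` (if `z = 1ⁿ` both are `1`),
which takes `n` more queries. If `x₀ = 0`, query `z₀`. If `z₀ = 0`, then `x = 0ⁿ` or `z = 0ⁿ`,
and in both cases the value is `⋁ᵢ (yᵢ ∧ zᵢ)`, computed with `2n` queries. If `z₀ = 1`, then
`x = 0ⁿ` or `z = 1ⁿ`, and one scan (`mixedTree`) serves both: for each `i` query `yᵢ`; if
`yᵢ = 0`, query `xᵢ` and answer `1` if it is `1` (so `z = 1ⁿ`); if `yᵢ = 1`, query `zᵢ` and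
answer `1` if it is `1`, while `zᵢ = 0` forces `x = 0ⁿ`, after which only `⋁ⱼ (yⱼ ∧ zⱼ)` over
the remaining indices is left. Each index costs at most two queries.
-/

@[simp]
theorem List.any_finRange_eq_decide {n : ℕ} (p : Fin n → Bool) :
    (List.finRange n).any p = decide (∃ i, p i = true) := by
  rw [Bool.eq_iff_iff]
  simp [List.any_eq_true]

namespace DTree

variable {m : ℕ} {ι : Type*}

theorem cost_node_le {i : Fin m} {t₀ t₁ : DTree m} {w : Fin m → Bool} {k : ℕ}
    (h₀ : t₀.cost w ≤ k) (h₁ : t₁.cost w ≤ k) : (node i t₀ t₁).cost w ≤ k + 1 := by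
  unfold cost
  split <;> omega

def anyTree (v : ι → Fin m) : List ι → DTree m
  | [] => leaf false
  | i :: l => node (v i) (anyTree v l) (leaf true)

theorem eval_anyTree (v : ι → Fin m) (l : List ι) (w : Fin m → Bool) :
    (anyTree v l).eval w = l.any fun i => w (v i) := by
  induction l with
  | nil => rfl
  | cons i l ih => cases h : w (v i) <;> simp [anyTree, eval, h, ih]

theorem cost_anyTree_le (v : ι → Fin m) (l : List ι) (w : Fin m → Bool) :
    (anyTree v l).cost w ≤ l.length := by
  induction l with
  | nil => simp [anyTree, cost]
  | cons i l ih => exact cost_node_le ih (by simp [cost])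

def anyAndTree (u v : ι → Fin m) : List ι → DTree m
  | [] => leaf false
  | i :: l => node (u i) (anyAndTree u v l) (node (v i) (anyAndTree u v l) (leaf true))

theorem eval_anyAndTree (u v : ι → Fin m) (l : List ι) (w : Fin m → Bool) :
    (anyAndTree u v l).eval w = l.any fun i => w (u i) && w (v i) := by
  induction l with
  | nil => rfl
  | cons i l ih =>
    cases hu : w (u i) <;> cases hv : w (v i) <;> simp [anyAndTree, eval, hu, hv, ih]

theorem cost_anyAndTree_le (u v : ι → Fin m) (l : List ι) (w : Fin m → Bool) :
    (anyAndTree u v l).cost w ≤ 2 * l.length := by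
  induction l with
  | nil => simp [anyAndTree, cost]
  | cons i l ih =>
    refine (cost_node_le (k := 2 * l.length + 1) (by omega) (cost_node_le ih ?_)).trans ?_
    · simp [cost]
    · simp only [List.length_cons]; omega

def mixedTree (x y z : ι → Fin m) : List ι → DTree m
  | [] => leaf false
  | i :: l =>
    node (y i) (node (x i) (mixedTree x y z l) (leaf true))
      (node (z i) (anyAndTree y z l) (leaf true))

theorem eval_mixedTree_of_forall_false (x y z : ι → Fin m) (l : List ι) (w : Fin m → Bool)
    (hx : ∀ i, w (x i) = false) :
    (mixedTree x y z l).eval w = l.any fun i => w (y i) && w (z i) := by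
  induction l with
  | nil => rfl
  | cons i l ih =>
    cases hy : w (y i) <;> cases hz : w (z i) <;>
      simp [mixedTree, eval, hx, hy, hz, ih, eval_anyAndTree]

theorem eval_mixedTree_of_forall_true (x y z : ι → Fin m) (l : List ι) (w : Fin m → Bool)
    (hz : ∀ i, w (z i) = true) :
    (mixedTree x y z l).eval w = l.any fun i => w (x i) || w (y i) := by
  induction l with
  | nil => rfl
  | cons i l ih =>
    cases hx : w (x i) <;> cases hy : w (y i) <;> simp [mixedTree, eval, hx, hy, hz, ih]

theorem cost_mixedTree_le (x y z : ι → Fin m) (l : List ι) (w : Fin m → Bool) :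
    (mixedTree x y z l).cost w ≤ 2 * l.length := by
  induction l with
  | nil => simp [mixedTree, cost]
  | cons i l ih =>
    have hrest := cost_anyAndTree_le y z l w
    refine (cost_node_le (k := 2 * l.length + 1) (cost_node_le ih ?_)
      (cost_node_le hrest ?_)).trans ?_
    all_goals simp [cost]
    omega

end DTree

open DTree

theorem gammaP_eq_some {n : ℕ} {w : Fin (n + n + n) → Bool} {b : Bool}
    (h : gammaP n w = some b) :
    ((∀ i, w (xV n i) = false) ∧ b = decide (∃ i, w (yV n i) = true ∧ w (zV n i) = true)) ∨
    ((∀ i, w (xV n i) = true) ∧ b = decide (∃ i, w (zV n i) = true)) ∨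
    ((∀ i, w (zV n i) = true) ∧ b = decide (∃ i, w (xV n i) = true ∨ w (yV n i) = true)) ∨
    ((∀ i, w (zV n i) = false) ∧ b = false) := by
  unfold gammaP at h
  split_ifs at h <;> simp_all

def gammaTree {n : ℕ} (i₀ : Fin n) : DTree (n + n + n) :=
  node (xV n i₀)
    (node (zV n i₀) (anyAndTree (yV n) (zV n) (List.finRange n))
      (mixedTree (xV n) (yV n) (zV n) (List.finRange n)))
    (anyTree (zV n) (List.finRange n))

theorem gammaTree_computesPartial {n : ℕ} (i₀ : Fin n) :
    (gammaTree i₀).ComputesPartial (gammaP n) := by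
  intro w b h
  rcases gammaP_eq_some h with ⟨hx, rfl⟩ | ⟨hx, rfl⟩ | ⟨hz, rfl⟩ | ⟨hz, rfl⟩
  · cases hz₀ : w (zV n i₀)
    · simp [gammaTree, eval, hx, hz₀, eval_anyAndTree]
    · simp [gammaTree, eval, hx, hz₀, eval_mixedTree_of_forall_false _ _ _ _ _ hx]
  · simp [gammaTree, eval, hx, eval_anyTree]
  · cases hx₀ : w (xV n i₀)
    · simp [gammaTree, eval, hx₀, hz, eval_mixedTree_of_forall_true _ _ _ _ _ hz]
    · have hxy : ∃ i, w (xV n i) = true ∨ w (yV n i) = true := ⟨i₀, .inl hx₀⟩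
      simp [gammaTree, eval, hx₀, hz, eval_anyTree, hxy, Nonempty.intro i₀]
  · cases hx₀ : w (xV n i₀) <;> simp [gammaTree, eval, hx₀, hz, eval_anyTree, eval_anyAndTree]

theorem cost_gammaTree_le {n : ℕ} (i₀ : Fin n) (w : Fin (n + n + n) → Bool) :
    (gammaTree i₀).cost w ≤ n + n + 2 := by
  have h₁ := cost_anyTree_le (zV n) (List.finRange n) w
  have h₂ := cost_anyAndTree_le (yV n) (zV n) (List.finRange n) w
  have h₃ := cost_mixedTree_le (xV n) (yV n) (zV n) (List.finRange n) w
  rw [List.length_finRange] at h₁ h₂ h₃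
  refine (cost_node_le (k := 2 * n + 1) (cost_node_le h₂ h₃) (by omega)).trans ?_
  omega

/-- the deterministic query complexity of the partial function `γ'_n` is at
most `2n + 2`. -/
theorem gammaP_query_complexity (n : ℕ) :
    ∃ T : DTree (n + n + n), T.ComputesPartial (gammaP n) ∧ ∀ w, T.cost w ≤ n + n + 2 := by
  cases n with
  | zero =>
    refine ⟨leaf false, fun w b hb => ?_, fun w => by simp [cost]⟩
    simp [gammaP] at hb
    simp [eval, ← hb]
  | succ m => exact ⟨gammaTree 0, gammaTree_computesPartial 0, cost_gammaTree_le 0⟩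
end
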